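/- arXiv:2512.16681 — 3 statements merged into one kernel-verified Lean document; each statement's English description precedes it below -/
import Mathlib

section
/- For every positive integer ν and every integer k with 1 ≤ k ≤ ν−1, the sum over ℓ from 0 to ν−1 of ℓ·sin(πk(2ℓ+1)/ν) equals −ν/(2·sin(πk/ν)). -/
/-!
Put `θ = πk/ν`. By the product-to-sum formulas,
`ℓ ↦ sin((2ℓ+1)θ) - 2ℓ sin θ cos(2ℓθ)` is a discrete antiderivative of `4 sin²θ · ℓ sin((2ℓ+1)θ)`,
so the sum telescopes. Since `νθ = kπ`, the boundary term at `ν` is `sin θ - 2ν sin θ`,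
and dividing by `4 sin²θ ≠ 0` gives the result.
-/

open Real Finset

theorem four_mul_sin_sq_mul_sum_range_mul_sin (θ : ℝ) (n : ℕ) :
    4 * sin θ ^ 2 * ∑ ℓ ∈ range n, (ℓ : ℝ) * sin ((2 * ℓ + 1) * θ)
      = sin ((2 * n + 1) * θ) - sin θ - 2 * n * sin θ * cos (2 * n * θ) := by
  induction n with
  | zero => simp
  | succ n ih =>
    set x := (2 * n + 1) * θ
    have h₁ : (2 * ((n + 1 : ℕ) : ℝ) + 1) * θ = x + 2 * θ := by push_cast; ring
    have h₂ : 2 * ((n + 1 : ℕ) : ℝ) * θ = x + θ := by push_cast; ring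
    have h₃ : 2 * (n : ℝ) * θ = x - θ := by ring
    rw [sum_range_succ, mul_add, ih, h₁, h₂, h₃, sin_add, cos_add, cos_sub, sin_two_mul,
      cos_two_mul]
    push_cast
    linear_combination -2 * sin x * sin_sq_add_cos_sq θ

theorem sum_range_mul_sin_of_mul_eq_nat_mul_pi {θ : ℝ} {n k : ℕ} (hθ : n * θ = k * π)
    (hsin : sin θ ≠ 0) :
    ∑ ℓ ∈ range n, (ℓ : ℝ) * sin ((2 * ℓ + 1) * θ) = -n / (2 * sin θ) := by
  have hcos : cos (2 * n * θ) = 1 := by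
    rw [mul_assoc, hθ, ← mul_assoc, mul_comm 2, mul_assoc, cos_nat_mul_two_pi]
  have hsin_odd : sin ((2 * n + 1) * θ) = sin θ := by
    rw [add_mul, one_mul, mul_assoc, hθ, ← mul_assoc, mul_comm 2, mul_assoc, add_comm,
      sin_add_nat_mul_two_pi]
  have hsum := four_mul_sin_sq_mul_sum_range_mul_sin θ n
  rw [hcos, hsin_odd] at hsum
  rw [eq_div_iff (mul_ne_zero two_ne_zero hsin)]
  apply mul_left_cancel₀ (mul_ne_zero two_ne_zero hsin)
  linear_combination hsum

theorem stmt_0_general (ν : ℕ) (k : ℕ) (hk1 : 1 ≤ k) (hk2 : k ≤ ν - 1) :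
    ∑ ℓ ∈ Finset.range ν,
      (ℓ : ℝ) * Real.sin (π * k * (2 * ℓ + 1) / ν)
      = -(ν : ℝ) / (2 * Real.sin (π * k / ν)) := by
  have hν : (0 : ℝ) < ν := by exact_mod_cast (show 0 < ν by omega)
  have hθ_pos : 0 < π * k / ν := by
    have : (0 : ℝ) < k := by exact_mod_cast hk1
    positivity
  have hθ_lt : π * k / ν < π := by
    rw [div_lt_iff₀ hν]
    have : (k : ℝ) < ν := by exact_mod_cast (show k < ν by omega)
    nlinarith [pi_pos]
  have hνθ : ν * (π * k / ν) = k * π := by field_simp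
  rw [← sum_range_mul_sin_of_mul_eq_nat_mul_pi hνθ (sin_pos_of_pos_of_lt_pi hθ_pos hθ_lt).ne']
  refine sum_congr rfl fun ℓ _ => ?_
  ring_nf

theorem stmt_0 (ν : ℕ) (hν : 0 < ν) (k : ℕ) (hk1 : 1 ≤ k) (hk2 : k ≤ ν - 1) :
    ∑ ℓ ∈ Finset.range ν,
      (ℓ : ℝ) * Real.sin (π * k * (2 * ℓ + 1) / ν)
      = -(ν : ℝ) / (2 * Real.sin (π * k / ν)) :=
  stmt_0_general ν k hk1 hk2
end

section
/- For a positive integer ν and an integer r with 0 ≤ r ≤ ν−1, the sum ∑_{k=1}^{ν−1} e^{2πirk/ν} / sin²(πk/ν) equals (ν² − 6νr + 6r² − 1)/3. -/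
/-!
With `ζ = exp (2πi/ν)` one has `1 / sin² (πk/ν) = -4 ζᵏ / (ζᵏ - 1)²`, so the sum is `-4 G r` with
`G r = ∑ₖ ζ^(kr) ζᵏ / (ζᵏ - 1)²`. Multiplying the `k`-th term by `(ζᵏ - 1)²` shows that the second
difference of `G` is `∑ₖ ζ^(k(r+1)) = -1` for `0 < r + 1 < ν`; moreover `G ν = G 0`, and
`∑_{r<ν} G r = 0` by orthogonality of characters. A sequence on `[0, ν]` with constant second
difference is quadratic, and these two boundary conditions single out the quadratic
`-(6r² - 6νr + ν² - 1)/12`.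
-/

open Complex Finset Real

theorem geom_sum_eq_zero_of_pow_eq_one {K : Type*} [DivisionRing K] {ω : K} {n : ℕ}
    (hω : ω ^ n = 1) (h1 : ω ≠ 1) : ∑ i ∈ range n, ω ^ i = 0 := by
  rw [geom_sum_eq h1, hω, sub_self, zero_div]

theorem Finset.sum_Icc_one_sub_one_eq {M : Type*} [AddCommGroup M] (f : ℕ → M) {n : ℕ}
    (hn : 0 < n) : ∑ k ∈ Icc 1 (n - 1), f k = ∑ k ∈ range n, f k - f 0 := by
  have hIcc : Icc 1 (n - 1) = Ico 1 n := by ext; simp; omega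
  rw [hIcc, range_eq_Ico, sum_eq_sum_Ico_succ_bot hn, add_sub_cancel_left]

theorem Complex.four_mul_exp_mul_sin_sq (x : ℂ) :
    4 * cexp (2 * x * I) * sin x ^ 2 = -(cexp (2 * x * I) - 1) ^ 2 := by
  rw [show 2 * x * I = ((2 : ℕ) : ℂ) * (x * I) by push_cast; ring, Complex.exp_nat_mul]
  set w := cexp (x * I)
  have hw : w ^ 2 - 1 = 2 * sin x * I * w := by
    rw [show w = cos x + sin x * I from exp_mul_I x]
    linear_combination sin_sq_add_cos_sq x - sin x ^ 2 * I_sq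
  linear_combination (w ^ 2 - 1 + 2 * sin x * I * w) * hw + 4 * sin x ^ 2 * w ^ 2 * I_sq

theorem eq_add_mul_of_second_diff_eq_zero {R : Type*} [CommRing R] {h : ℕ → R} {n : ℕ}
    (hdiff : ∀ r, r + 2 ≤ n → h (r + 2) - 2 * h (r + 1) + h r = 0) {r : ℕ} (hr : r ≤ n) :
    h r = h 0 + r * (h 1 - h 0) := by
  have hpair : ∀ r, r + 1 ≤ n →
      h r = h 0 + r * (h 1 - h 0) ∧ h (r + 1) = h 0 + (r + 1) * (h 1 - h 0) := by
    intro r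
    induction r with
    | zero => intro; constructor <;> simp
    | succ r ih =>
      intro hr
      obtain ⟨ih₀, ih₁⟩ := ih (by omega)
      refine ⟨by exact_mod_cast ih₁, ?_⟩
      push_cast
      linear_combination hdiff r (by omega) + 2 * ih₁ - ih₀
  rcases r with _ | r
  · simp
  · exact_mod_cast (hpair r hr).2

theorem eq_of_second_diff_eq_const {K : Type*} [Field K] [CharZero K] {g : ℕ → K} {n : ℕ}
    {d : K} (hn : 0 < n) (hdiff : ∀ r, r + 2 ≤ n → g (r + 2) - 2 * g (r + 1) + g r = d)
    (hper : g n = g 0) (hsum : ∑ r ∈ range n, g r = 0) {r : ℕ} (hr : r ≤ n) :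
    g r = d / 12 * (6 * r ^ 2 - 6 * n * r + n ^ 2 - 1) := by
  set q : ℕ → K := fun r => d / 12 * (6 * r ^ 2 - 6 * n * r + n ^ 2 - 1)
  have hq_sum : ∀ m, ∑ r ∈ range m, q r
      = d / 12 * (m * ((m - 1) * (2 * m - 1) - 3 * n * (m - 1) + n ^ 2 - 1)) := by
    intro m
    induction m with
    | zero => simp
    | succ m ih => rw [sum_range_succ, ih]; push_cast; ring
  have hn₀ : (n : K) ≠ 0 := Nat.cast_ne_zero.mpr hn.ne'
  set h : ℕ → K := fun r => g r - q r
  have h_affine : ∀ r ≤ n, h r = h 0 + r * (h 1 - h 0) :=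
    fun r hr => eq_add_mul_of_second_diff_eq_zero (fun r hr => by
      simp only [h, q]; push_cast; linear_combination hdiff r hr) hr
  have hslope : h 1 - h 0 = 0 := by
    have hmul : (n : K) * (h 1 - h 0) = 0 := by
      have := h_affine n le_rfl
      simp only [h, q, hper] at this ⊢
      linear_combination -this
    exact (mul_eq_zero.mp hmul).resolve_left hn₀
  have hbase : h 0 = 0 := by
    have hmul : (n : K) * h 0 = 0 := calc
      (n : K) * h 0 = ∑ r ∈ range n, h r := by
        rw [sum_congr rfl fun r hr => by rw [h_affine r (mem_range.mp hr).le, hslope, mul_zero,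
          add_zero], sum_const, card_range, nsmul_eq_mul]
      _ = 0 := by simp only [h, sum_sub_distrib, hsum, hq_sum]; ring
    exact (mul_eq_zero.mp hmul).resolve_left hn₀
  have := h_affine r hr
  rw [hslope, hbase, mul_zero, add_zero] at this
  exact sub_eq_zero.mp this

theorem IsPrimitiveRoot.sum_Icc_pow_mul_div_sub_one_sq {K : Type*} [Field K] [CharZero K]
    {ζ : K} {n : ℕ} (hζ : IsPrimitiveRoot ζ n) (hn : 0 < n) {r : ℕ} (hr : r ≤ n) :
    ∑ k ∈ Icc 1 (n - 1), ζ ^ (k * r) * (ζ ^ k / (ζ ^ k - 1) ^ 2)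
      = -(6 * (r : K) ^ 2 - 6 * n * r + n ^ 2 - 1) / 12 := by
  have hpow_ne_one : ∀ k ∈ Icc 1 (n - 1), ζ ^ k ≠ 1 := fun k hk => by
    rw [mem_Icc] at hk
    exact hζ.pow_ne_one_of_pos_of_lt (by omega) (by omega)
  have hpow_pow : ∀ k, (ζ ^ k) ^ n = 1 := fun k => by
    rw [← pow_mul, mul_comm, pow_mul, hζ.pow_eq_one, one_pow]
  refine (eq_of_second_diff_eq_const (g := fun r => ∑ k ∈ Icc 1 (n - 1),
    ζ ^ (k * r) * (ζ ^ k / (ζ ^ k - 1) ^ 2)) (d := -1) hn ?diff ?per ?sum hr).trans (by ring)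
  case diff =>
    intro r hr
    have hroot : ∑ k ∈ Icc 1 (n - 1), (ζ ^ (r + 1)) ^ k = -1 := by
      rw [sum_Icc_one_sub_one_eq _ hn, geom_sum_eq_zero_of_pow_eq_one (hpow_pow _)
        (hζ.pow_ne_one_of_pos_of_lt (by omega) (by omega)), pow_zero, zero_sub]
    rw [← hroot, mul_sum, ← sum_sub_distrib, ← sum_add_distrib]
    refine sum_congr rfl fun k hk => ?_
    have hsub : ζ ^ k - 1 ≠ 0 := sub_ne_zero.mpr (hpow_ne_one k hk)
    rw [← pow_mul, mul_comm (r + 1) k]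
    simp only [pow_mul]
    field_simp
    ring
  case per =>
    refine sum_congr rfl fun k _ => ?_
    rw [pow_mul, hpow_pow, mul_zero, pow_zero]
  case sum =>
    rw [sum_comm]
    refine sum_eq_zero fun k hk => ?_
    simp only [pow_mul, ← sum_mul]
    rw [geom_sum_eq_zero_of_pow_eq_one (hpow_pow k) (hpow_ne_one k hk), zero_mul]

theorem stmt_2 (ν : ℕ) (hν : 0 < ν) (r : ℕ) (hr : r ≤ ν - 1) :
    ∑ k ∈ Finset.Icc 1 (ν - 1),
      Complex.exp (2 * Real.pi * Complex.I * r * k / ν) / ((Real.sin (π * k / ν) : ℂ))^2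
      = ((ν : ℂ)^2 - 6 * ν * r + 6 * (r : ℂ)^2 - 1) / 3 := by
  set ζ := cexp (2 * π * I / ν)
  -- valid for every `k`: when `ζ ^ k = 1` both sides are junk zeros of a division by zero
  have hterm : ∀ k : ℕ, cexp (2 * π * I * r * k / ν) / (Real.sin (π * k / ν) : ℂ) ^ 2
      = -4 * (ζ ^ (k * r) * (ζ ^ k / (ζ ^ k - 1) ^ 2)) := fun k => by
    have hexp : ζ ^ k = cexp (2 * ((π * k / ν : ℝ) : ℂ) * I) := by
      rw [← Complex.exp_nat_mul]; push_cast; ring_nf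
    have hsin : (Real.sin (π * k / ν) : ℂ) ^ 2 = -(ζ ^ k - 1) ^ 2 / (4 * ζ ^ k) := by
      refine eq_div_of_mul_eq (by simp [ζ, Complex.exp_ne_zero]) ?_
      rw [mul_comm, hexp, ofReal_sin]
      exact four_mul_exp_mul_sin_sq _
    have hnum : cexp (2 * π * I * r * k / ν) = ζ ^ (k * r) := by
      rw [← Complex.exp_nat_mul]; push_cast; ring_nf
    rw [hnum, hsin, div_div_eq_mul_div, div_neg]
    ring
  rw [sum_congr rfl fun k _ => hterm k, ← mul_sum,
    (isPrimitiveRoot_exp ν hν.ne').sum_Icc_pow_mul_div_sub_one_sq hν (by omega)]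
  ring
end

section
/- For β, γ complex numbers with positive real part and ν complex, the integral ∫₀^∞ t^{ν−1} e^{−βt−γ/t} dt equals 2(γ/β)^{ν/2} K_ν(2√(βγ)), where K_ν is the modified Bessel function of the second kind and the square root is principal. -/
/-!
Write `β = e^{u-s}` and `γ = e^{u+s}` with `|Im (u ± s)| < π/2`. After `t = e^w` the integrand
becomes `e^{νs} g(w - s)` for the entire function `g ζ = e^{νζ - z cosh ζ}`, `z = 2e^u`, so the
integral is `e^{νs}` times the integral of `g` along the horizontal line `Im ζ = -Im s`.
On the strip between that line and `ℝ` the arguments of `z e^{±iy}` stay between `arg β` and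
`arg γ`, hence `Re (z cosh (v + iy)) ≥ δ cosh v` for some `δ > 0`, and `g` has a Gaussian
majorant uniformly in the strip. Cauchy's theorem on long rectangles therefore moves the line to
`ℝ`, where `∫ g = 2 K_ν(z)` by the symmetry `v ↦ -v`. Finally `e^{νs} = (γ/β)^{ν/2}` and
`e^u = √(βγ)` for the principal branches.
-/

open Complex MeasureTheory

/-- The modified Bessel function of the second kind, via its standard integral
representation `K_ν(z) = ∫₀^∞ e^{-z cosh t} cosh (ν t) dt` (valid for `Re z > 0`). -/
noncomputable def besselK (ν z : ℂ) : ℂ :=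
  ∫ t in Set.Ioi (0 : ℝ), Complex.exp (-z * Real.cosh t) * Complex.cosh (ν * t)

open Set Filter Topology
open scoped Interval

theorem integral_add_mul_I_eq_integral_of_norm_le {f : ℂ → ℂ} {c : ℝ} {b : ℝ → ℝ}
    (hf : DifferentiableOn ℂ f (univ ×ℂ [[0, c]])) (hb : Integrable b)
    (hb0 : Tendsto b (cocompact ℝ) (𝓝 0))
    (hfb : ∀ x : ℝ, ∀ y ∈ [[0, c]], ‖f (x + y * I)‖ ≤ b x) :
    ∫ x : ℝ, f (x + c * I) = ∫ x : ℝ, f x := by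
  have hline : ∀ y ∈ [[0, c]], Integrable fun x : ℝ => f (x + y * I) := fun y hy =>
    hb.mono' ((hf.continuousOn.comp_continuous (by fun_prop) fun x => by
      simpa [mem_reProdIm] using hy).aestronglyMeasurable) (ae_of_all _ fun x => hfb x y hy)
  set V : ℝ → ℂ := fun x => ∫ y in (0 : ℝ)..c, f (x + y * I)
  have hV : Tendsto V (cocompact ℝ) (𝓝 0) := by
    refine squeeze_zero_norm (fun x => ?_) (by simpa using hb0.mul_const |c|)
    simpa using intervalIntegral.norm_integral_le_of_norm_le_const fun y hy =>
      hfb x y (uIoc_subset_uIcc hy)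
  have hrect : ∀ T : ℝ,
      ∫ x in -T..T, f (x + c * I) = (∫ x in -T..T, f x) + I • V T - I • V (-T) := by
    intro T
    have := integral_boundary_rect_eq_zero_of_differentiableOn f (-T) (T + c * I)
      (hf.mono fun w hw => ⟨trivial, by simpa using hw.2⟩)
    simp only [neg_re, ofReal_re, ofReal_im, neg_im, neg_zero, add_re, add_im, mul_re, mul_im,
      I_re, I_im, mul_zero, mul_one, sub_zero, zero_add, add_zero, ofReal_zero, zero_mul] at this
    linear_combination -this
  have hlim : Tendsto (fun T : ℝ => (∫ x in -T..T, f x) + I • V T - I • V (-T)) atTop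
      (𝓝 ((∫ x : ℝ, f x) + I • 0 - I • 0)) :=
    ((intervalIntegral_tendsto_integral (hline 0 left_mem_uIcc |>.congr (by simp))
      tendsto_neg_atTop_atBot tendsto_id).add
      ((hV.mono_left atTop_le_cocompact).const_smul I)).sub
      (((hV.mono_left atBot_le_cocompact).comp tendsto_neg_atTop_atBot).const_smul I)
  rw [smul_zero, add_zero, sub_zero] at hlim
  exact tendsto_nhds_unique (intervalIntegral_tendsto_integral (hline c right_mem_uIcc)
    tendsto_neg_atTop_atBot tendsto_id) (hlim.congr fun T => (hrect T).symm)

theorem tendsto_const_mul_exp_neg_mul_sq_cocompact {b : ℝ} (hb : 0 < b) (C : ℝ) :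
    Tendsto (fun x : ℝ => C * Real.exp (-b * x ^ 2)) (cocompact ℝ) (𝓝 0) := by
  simpa using (tendsto_rpow_abs_mul_exp_neg_mul_sq_cocompact hb 0).const_mul C

theorem integral_eq_integral_Ioi_add_comp_neg {E : Type*} [NormedAddCommGroup E]
    [NormedSpace ℝ E] {f : ℝ → E} (hf : Integrable f) :
    ∫ x, f x = ∫ x in Ioi 0, (f x + f (-x)) := by
  rw [integral_add hf.integrableOn hf.comp_neg.integrableOn, integral_comp_neg_Ioi, neg_zero,
    add_comm, intervalIntegral.integral_Iic_add_Ioi hf.integrableOn hf.integrableOn]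

theorem integral_Ioi_zero_eq_integral_exp_smul {E : Type*} [NormedAddCommGroup E]
    [NormedSpace ℝ E] (f : ℝ → E) :
    ∫ t in Ioi 0, f t = ∫ x, Real.exp x • f (Real.exp x) := by
  rw [← Real.range_exp, ← image_univ, integral_image_eq_integral_abs_deriv_smul
    MeasurableSet.univ (fun x _ => (Real.hasDerivAt_exp x).hasDerivWithinAt)
    Real.exp_injective.injOn, setIntegral_univ]
  simp_rw [abs_of_pos (Real.exp_pos _)]

theorem Real.sq_div_four_le_cosh (x : ℝ) : x ^ 2 / 4 ≤ Real.cosh x := by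
  rw [← Real.cosh_abs, Real.cosh_eq, ← sq_abs]
  nlinarith [Real.quadratic_le_exp_of_nonneg (abs_nonneg x), Real.exp_pos (-|x|), abs_nonneg x]

theorem Complex.re_mul_cosh_add_mul_I (z : ℂ) (v y : ℝ) :
    (z * cosh (v + y * I)).re =
      (Real.exp v * (z * cexp (y * I)).re + Real.exp (-v) * (z * cexp (-(y * I))).re) / 2 := by
  have : z * cosh (v + y * I) =
      ((Real.exp v : ℂ) * (z * cexp (y * I)) +
        (Real.exp (-v) : ℂ) * (z * cexp (-(y * I)))) / 2 := by
    rw [cosh, ofReal_exp, ofReal_exp, neg_add, exp_add, exp_add, ofReal_neg]; ring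
  rw [this, div_ofNat_re, add_re, re_ofReal_mul, re_ofReal_mul]

theorem Complex.re_exp_pos {w : ℂ} (hw : |w.im| < Real.pi / 2) : 0 < (cexp w).re := by
  rw [exp_re]
  exact mul_pos (Real.exp_pos _) (Real.cos_pos_of_mem_Ioo (abs_lt.mp hw))

theorem Complex.exp_cpow {x : ℂ} (h₁ : -Real.pi < x.im) (h₂ : x.im ≤ Real.pi) (y : ℂ) :
    cexp x ^ y = cexp (x * y) := by
  rw [cpow_def_of_ne_zero (exp_ne_zero x), log_exp h₁ h₂]

theorem Complex.exists_exp_eq_abs_im_lt {z : ℂ} (hz : 0 < z.re) :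
    ∃ p : ℂ, cexp p = z ∧ |p.im| < Real.pi / 2 :=
  ⟨log z, exp_log (ne_of_apply_ne re (by simpa using hz.ne')),
    by rw [log_im]; exact abs_arg_lt_pi_div_two_iff.mpr (Or.inl hz)⟩

noncomputable def besselKKernel (ν z w : ℂ) : ℂ := cexp (ν * w - z * cosh w)

namespace besselKKernel

variable {ν z : ℂ}

theorem differentiable (ν z : ℂ) : Differentiable ℂ (besselKKernel ν z) := by
  unfold besselKKernel; fun_prop

theorem norm_add_mul_I_le {δ Y : ℝ} (hδ : 0 < δ) {v y : ℝ} (hy : |y| ≤ Y)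
    (h₁ : δ ≤ (z * cexp (y * I)).re) (h₂ : δ ≤ (z * cexp (-(y * I))).re) :
    ‖besselKKernel ν z (v + y * I)‖ ≤
      Real.exp (‖ν‖ * Y + 2 * ‖ν‖ ^ 2 / δ) * Real.exp (-(δ / 8) * v ^ 2) := by
  have hν : (ν * (v + y * I)).re ≤ ‖ν‖ * |v| + ‖ν‖ * Y := by
    calc (ν * (v + y * I)).re ≤ ‖ν‖ * ‖(v : ℂ) + y * I‖ :=
          (re_le_norm _).trans (norm_mul _ _).le
      _ ≤ ‖ν‖ * (|v| + |y|) := by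
        gcongr; exact (norm_add_le _ _).trans (by simp)
      _ ≤ ‖ν‖ * |v| + ‖ν‖ * Y := by rw [mul_add]; gcongr
  have hcosh : δ * (v ^ 2 / 4) ≤ (z * cosh (v + y * I)).re := by
    rw [re_mul_cosh_add_mul_I]
    calc δ * (v ^ 2 / 4) ≤ δ * Real.cosh v := by gcongr; exact Real.sq_div_four_le_cosh v
      _ = (Real.exp v * δ + Real.exp (-v) * δ) / 2 := by rw [Real.cosh_eq]; ring
      _ ≤ _ := by gcongr
  rw [besselKKernel, norm_exp, ← Real.exp_add, Real.exp_le_exp, sub_re]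
  have hsq : 0 ≤ (δ * |v| - 4 * ‖ν‖) ^ 2 / (8 * δ) := by positivity
  have hexpand : (δ * |v| - 4 * ‖ν‖) ^ 2 / (8 * δ) =
      δ * (v ^ 2 / 4) - ‖ν‖ * |v| + 2 * ‖ν‖ ^ 2 / δ - δ / 8 * v ^ 2 := by
    field_simp; rw [← sq_abs v]; ring
  linarith

theorem integrable (hz : 0 < z.re) : Integrable fun v : ℝ => besselKKernel ν z v := by
  refine ((integrable_exp_neg_mul_sq (b := z.re / 8) (by positivity)).const_mul
    (Real.exp (‖ν‖ * 0 + 2 * ‖ν‖ ^ 2 / z.re))).mono'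
    ((differentiable ν z).continuous.comp continuous_ofReal).aestronglyMeasurable
    (ae_of_all _ fun v => ?_)
  simpa using norm_add_mul_I_le (ν := ν) (z := z) hz (v := v) (y := 0) (Y := 0) (by simp)
    (by simp) (by simp)

theorem integral_eq_two_mul_besselK (hz : 0 < z.re) :
    ∫ v : ℝ, besselKKernel ν z v = 2 * besselK ν z := by
  rw [integral_eq_integral_Ioi_add_comp_neg (integrable hz), besselK, ← integral_const_mul]
  refine setIntegral_congr_fun measurableSet_Ioi fun v _ => ?_
  simp only [besselKKernel, ofReal_neg, mul_neg, cosh_neg, ofReal_cosh]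
  rw [mul_left_comm, two_cosh]
  simp only [sub_eq_add_neg, exp_add, neg_mul]
  ring

theorem integral_add_mul_I {c : ℝ}
    (hc : ∀ y ∈ [[0, c]], 0 < (z * cexp (y * I)).re ∧ 0 < (z * cexp (-(y * I))).re) :
    ∫ v : ℝ, besselKKernel ν z (v + c * I) = ∫ v : ℝ, besselKKernel ν z v := by
  set m : ℝ → ℝ := fun y => min (z * cexp (y * I)).re (z * cexp (-(y * I))).re
  obtain ⟨y₀, hy₀, hmin⟩ := isCompact_uIcc.exists_isMinOn nonempty_uIcc
    (show Continuous m by fun_prop).continuousOn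
  have hδ : 0 < m y₀ := lt_min (hc y₀ hy₀).1 (hc y₀ hy₀).2
  exact integral_add_mul_I_eq_integral_of_norm_le (differentiable ν z).differentiableOn
    ((integrable_exp_neg_mul_sq (by positivity)).const_mul _)
    (tendsto_const_mul_exp_neg_mul_sq_cocompact (by positivity) _) fun v y hy =>
      norm_add_mul_I_le hδ (by simpa using abs_sub_left_of_mem_uIcc hy)
        ((hmin hy).trans (min_le_left _ _)) ((hmin hy).trans (min_le_right _ _))

end besselKKernel

theorem rexp_smul_cpow_mul_exp_eq (ν u s : ℂ) (w : ℝ) :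
    Real.exp w • ((Real.exp w : ℂ) ^ (ν - 1) *
      cexp (-cexp (u - s) * Real.exp w - cexp (u + s) / Real.exp w)) =
      cexp (ν * s) * besselKKernel ν (2 * cexp u) (w - s) := by
  have hpow : (Real.exp w : ℂ) ^ (ν - 1) = cexp ((ν - 1) * w) := by
    rw [cpow_def_of_ne_zero (by exact_mod_cast (Real.exp_pos w).ne'), ← ofReal_log
      (Real.exp_pos w).le, Real.log_exp, mul_comm]
  have h₁ : cexp (u - s) * cexp w = cexp u * cexp (w - s) := by
    rw [← exp_add, ← exp_add]; ring_nf
  have h₂ : cexp (u + s) / cexp w = cexp u * cexp (-(w - s)) := by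
    rw [← exp_sub, ← exp_add]; ring_nf
  rw [besselKKernel, real_smul, hpow, ofReal_exp, cosh, ← exp_add, ← exp_add, ← exp_add]
  congr 1
  linear_combination -h₁ - h₂

theorem integral_cpow_mul_exp_eq_besselK (ν u s : ℂ) (h₁ : |(u - s).im| < Real.pi / 2)
    (h₂ : |(u + s).im| < Real.pi / 2) :
    ∫ t in Ioi (0 : ℝ), (t : ℂ) ^ (ν - 1) * cexp (-cexp (u - s) * t - cexp (u + s) / t) =
      2 * cexp (ν * s) * besselK ν (2 * cexp u) := by
  have hstrip : ∀ y ∈ [[0, -s.im]], 0 < (2 * cexp u * cexp (y * I)).re ∧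
      0 < (2 * cexp u * cexp (-(y * I))).re := by
    intro y hy
    -- `Im u + y` lies between `Im u` and `Im (u - s)`, and `Im u - y` between `Im u` and `Im (u + s)`
    simp only [mul_assoc, ← exp_add, mul_re, re_ofNat, im_ofNat, zero_mul, sub_zero]
    simp only [sub_im, add_im] at h₁ h₂
    rw [abs_lt] at h₁ h₂
    rw [mem_uIcc] at hy
    constructor <;> refine mul_pos two_pos (re_exp_pos (abs_lt.mpr ?_)) <;>
      simp only [add_im, neg_im, mul_im, ofReal_re, ofReal_im, I_re, I_im] <;>
      constructor <;> rcases hy with ⟨hy₁, hy₂⟩ | ⟨hy₁, hy₂⟩ <;> linarith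
  have hshift : ∫ w : ℝ, besselKKernel ν (2 * cexp u) (w - s) =
      ∫ v : ℝ, besselKKernel ν (2 * cexp u) (v + (-s.im : ℝ) * I) := by
    rw [← integral_add_right_eq_self _ s.re]
    congr 1 with v
    congr 1
    apply Complex.ext <;> simp
  rw [integral_Ioi_zero_eq_integral_exp_smul]
  simp_rw [rexp_smul_cpow_mul_exp_eq]
  rw [integral_const_mul, hshift, besselKKernel.integral_add_mul_I hstrip,
    besselKKernel.integral_eq_two_mul_besselK (by simpa using (hstrip 0 left_mem_uIcc).1)]
  ring

theorem stmt_3 (β γ ν : ℂ) (hβ : 0 < β.re) (hγ : 0 < γ.re) :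
    (∫ t in Set.Ioi (0 : ℝ), (t : ℂ) ^ (ν - 1) * Complex.exp (-β * t - γ / t))
      = 2 * (γ / β) ^ (ν / 2) * besselK ν (2 * (β * γ) ^ ((1 : ℂ) / 2)) := by
  obtain ⟨p, rfl, hp⟩ := exists_exp_eq_abs_im_lt hβ
  obtain ⟨q, rfl, hq⟩ := exists_exp_eq_abs_im_lt hγ
  have hsub : (p + q) / 2 - (q - p) / 2 = p := by ring
  have hadd : (p + q) / 2 + (q - p) / 2 = q := by ring
  have key := integral_cpow_mul_exp_eq_besselK ν ((p + q) / 2) ((q - p) / 2)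
    (by rwa [hsub]) (by rwa [hadd])
  rw [hsub, hadd] at key
  rw [abs_lt] at hp hq
  rw [key, ← exp_sub, ← exp_add, exp_cpow (by simp; linarith) (by simp; linarith),
    exp_cpow (by simp; linarith) (by simp; linarith)]
  ring_nf
end
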